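/- Let G be a nilpotent group of class at most two and H a subgroup of G. Let x, y ∈ G, let q > 0 be an integer, and suppose there exist x', y' in the commutator subgroup [G,G] such that x^q·x' ∈ H and y^q·y' ∈ H. Then [x,y]^q lies in dom_G^{𝒩₂}(H). -/

import Mathlib

/-!
In a group `K` of class at most two, `commElem` is bimultiplicative and kills central elements.
If `f, g : G →* K` agree on `H`, then `f x ^ q` and `g x ^ q` differ only by images of the
commutator element `x'`, which are central in `K`; hence
`commElem (f x) b ^ q = commElem (f x ^ q) b = commElem (g x ^ q) b = commElem (g x) b ^ q`
for every `b`, and likewise in the second argument using `y ^ q * y' ∈ H`.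
-/

universe u v

/-- The dominion of a subgroup `H` of `G` in the class of groups `P`. -/
def dominion {G : Type v} [Group G] (P : (K : Type u) → [Group K] → Prop)
    (H : Subgroup G) : Set G :=
  {a : G | ∀ (K : Type u) [Group K], P K → ∀ f g : G →* K,
    (∀ h ∈ H, f h = g h) → f a = g a}

/-- The commutator `[a,b] = a⁻¹b⁻¹ab`. -/
def commElem {G : Type v} [Group G] (a b : G) : G := a⁻¹ * b⁻¹ * a * b

/-- The class `𝒩₂` of nilpotent groups of class at most two. -/
def NilTwo (K : Type u) [Group K] : Prop := (⊤ : Subgroup K).lowerCentralSeries 2 = ⊥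

open Subgroup
open scoped commutatorElement

lemma NilTwo.commutator_le_center {K : Type*} [Group K] (hK : NilTwo K) :
    commutator K ≤ center K := by
  rw [← commutator_top_right_eq_bot_iff_le_center, ← top_lowerCentralSeries_one,
    ← Subgroup.lowerCentralSeries_succ]
  exact hK

lemma MonoidHom.map_mem_commutator {G K : Type*} [Group G] [Group K] (f : G →* K) {z : G}
    (hz : z ∈ commutator G) : f z ∈ commutator K := by
  have hmap : (commutator G).map f ≤ commutator K := by
    rw [map_commutator_eq]
    exact commutator_mono le_top le_top
  exact hmap (mem_map_of_mem f hz)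

section commElem

variable {K : Type*} [Group K]

lemma map_commElem {G : Type*} [Group G] (f : G →* K) (a b : G) :
    f (commElem a b) = commElem (f a) (f b) := by
  simp only [commElem, map_mul, map_inv]

lemma commElem_inv (a b : K) : (commElem a b)⁻¹ = commElem b a := by
  simp only [commElem]
  group

lemma commElem_eq_commutatorElement (a b : K) : commElem a b = ⁅a⁻¹, b⁻¹⁆ := by
  simp only [commElem, commutatorElement_def, inv_inv]

lemma commElem_mul_mem_center_left {c : K} (hc : c ∈ center K) (a b : K) :
    commElem (a * c) b = commElem a b := by
  have hcomm : a⁻¹ * b⁻¹ * a * c = c * (a⁻¹ * b⁻¹ * a) := mem_center_iff.mp hc _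
  calc commElem (a * c) b = c⁻¹ * (a⁻¹ * b⁻¹ * a * c) * b := by simp only [commElem]; group
    _ = commElem a b := by rw [hcomm]; simp only [commElem]; group

variable (hK : commutator K ≤ center K)
include hK

lemma commElem_mem_center (a b : K) : commElem a b ∈ center K :=
  hK (commElem_eq_commutatorElement a b ▸ commutator_mem_commutator (mem_top _) (mem_top _))

lemma commElem_mul_left (a a' b : K) :
    commElem (a * a') b = commElem a b * commElem a' b := by
  have hcomm : a'⁻¹ * commElem a b = commElem a b * a'⁻¹ :=
    mem_center_iff.mp (commElem_mem_center hK a b) _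
  calc commElem (a * a') b = a'⁻¹ * commElem a b * (b⁻¹ * a' * b) := by
        simp only [commElem]; group
    _ = commElem a b * commElem a' b := by rw [hcomm]; simp only [commElem]; group

lemma commElem_pow_left (a b : K) (n : ℕ) : commElem (a ^ n) b = commElem a b ^ n := by
  induction n with
  | zero => simp [commElem]
  | succ n ih => rw [pow_succ, commElem_mul_left hK, ih, pow_succ]

lemma commElem_pow_right (a b : K) (n : ℕ) : commElem a (b ^ n) = commElem a b ^ n := by
  rw [← commElem_inv, commElem_pow_left hK, ← inv_pow, commElem_inv]

lemma commElem_pow_left_eq_of_pow_mul_eq {a a' c c' : K} {n : ℕ} (hc : c ∈ center K)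
    (hc' : c' ∈ center K) (h : a ^ n * c = a' ^ n * c') (b : K) :
    commElem a b ^ n = commElem a' b ^ n := by
  rw [← commElem_pow_left hK, ← commElem_pow_left hK, ← commElem_mul_mem_center_left hc,
    h, commElem_mul_mem_center_left hc']

lemma commElem_pow_right_eq_of_pow_mul_eq {b b' c c' : K} {n : ℕ} (hc : c ∈ center K)
    (hc' : c' ∈ center K) (h : b ^ n * c = b' ^ n * c') (a : K) :
    commElem a b ^ n = commElem a b' ^ n := by
  rw [← commElem_inv, ← commElem_inv b', inv_pow, inv_pow,
    commElem_pow_left_eq_of_pow_mul_eq hK hc hc' h]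

end commElem

theorem comm_pow_mem_dominion_general {G : Type u} [Group G]
    (H : Subgroup G)
    (x y : G) (q : ℕ) (x' y' : G)
    (hx' : x' ∈ commutator G) (hy' : y' ∈ commutator G)
    (hx : x ^ q * x' ∈ H) (hy : y ^ q * y' ∈ H) :
    (commElem x y) ^ q ∈ dominion NilTwo H := by
  intro K _ hK f g hfg
  have hKc := hK.commutator_le_center
  have central {z : G} (hz : z ∈ commutator G) (φ : G →* K) : φ z ∈ center K :=
    hKc (φ.map_mem_commutator hz)
  have hxq : f x ^ q * f x' = g x ^ q * g x' := by simpa using hfg _ hx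
  have hyq : f y ^ q * f y' = g y ^ q * g y' := by simpa using hfg _ hy
  simp only [map_pow, map_commElem]
  rw [commElem_pow_left_eq_of_pow_mul_eq hKc (central hx' f) (central hx' g) hxq,
    commElem_pow_right_eq_of_pow_mul_eq hKc (central hy' f) (central hy' g) hyq]

/-- Let `G` be nilpotent of class at most two, `H ≤ G`, `x, y ∈ G`, `q > 0`,
and suppose `x' , y'` in the commutator subgroup of `G` satisfy `x^q x' ∈ H`
and `y^q y' ∈ H`.  Then `[x,y]^q` lies in the `𝒩₂`-dominion of `H` in `G`. -/
theorem comm_pow_mem_dominion {G : Type u} [Group G]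
    (hG : (⊤ : Subgroup G).lowerCentralSeries 2 = ⊥) (H : Subgroup G)
    (x y : G) (q : ℕ) (hq : 0 < q) (x' y' : G)
    (hx' : x' ∈ commutator G) (hy' : y' ∈ commutator G)
    (hx : x ^ q * x' ∈ H) (hy : y ^ q * y' ∈ H) :
    (commElem x y) ^ q ∈ dominion NilTwo H :=
  comm_pow_mem_dominion_general H x y q x' y' hx' hy' hx hy
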